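/- Let C be the subgroup of (Z/4Z)^2 × (Z/4Z)^2 generated by the elements (1,1,2,0) and (1,0,1,1). Then C has order 16, and the subgroup of automorphisms of the ambient group given by componentwise multiplication by units (u_1, u_2, u_3, u_4) ∈ ((Z/4Z)^×)^4 that stabilize C is exactly {(1,1,1,1), (-1,-1,-1,-1)} ≅ Z/2Z. -/
import Mathlib

namespace Stmt11Aux

abbrev g1 : Fin 4 → ZMod 4 := ![1,1,2,0]
abbrev g2 : Fin 4 → ZMod 4 := ![1,0,1,1]

def H : AddSubgroup (Fin 4 → ZMod 4) where
  carrier := {x | ∃ a b : ZMod 4, a • g1 + b • g2 = x}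
  zero_mem' := ⟨0, 0, by simp⟩
  add_mem' := by
    rintro x y ⟨a, b, rfl⟩ ⟨c, d, rfl⟩
    exact ⟨a + c, b + d, by rw [add_smul, add_smul]; abel⟩
  neg_mem' := by
    rintro x ⟨a, b, rfl⟩
    exact ⟨-a, -b, by rw [neg_add, neg_smul, neg_smul]⟩

lemma memH (x : Fin 4 → ZMod 4) : x ∈ H ↔ ∃ a b : ZMod 4, a • g1 + b • g2 = x := Iff.rfl

lemma key : AddSubgroup.closure ({g1, g2} : Set (Fin 4 → ZMod 4)) = H := by
  apply le_antisymm
  · rw [AddSubgroup.closure_le]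
    rintro x (rfl | rfl)
    · exact ⟨1, 0, by simp⟩
    · exact ⟨0, 1, by simp⟩
  · rintro x ⟨a, b, rfl⟩
    have h1 : g1 ∈ AddSubgroup.closure ({g1, g2} : Set (Fin 4 → ZMod 4)) :=
      AddSubgroup.subset_closure (by simp)
    have h2 : g2 ∈ AddSubgroup.closure ({g1, g2} : Set (Fin 4 → ZMod 4)) :=
      AddSubgroup.subset_closure (by simp)
    have e1 : a • g1 = a.val • g1 := by
      rw [← Nat.cast_smul_eq_nsmul (ZMod 4), ZMod.natCast_val, ZMod.cast_id]
    have e2 : b • g2 = b.val • g2 := by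
      rw [← Nat.cast_smul_eq_nsmul (ZMod 4), ZMod.natCast_val, ZMod.cast_id]
    rw [e1, e2]
    exact AddSubgroup.add_mem _ (AddSubgroup.nsmul_mem _ h1 _) (AddSubgroup.nsmul_mem _ h2 _)

lemma inj : Function.Injective (fun p : ZMod 4 × ZMod 4 => p.1 • g1 + p.2 • g2) := by decide

set_option maxRecDepth 4000 in
lemma aux : ∀ v : Fin 4 → ZMod 4, (∀ i, v i = 1 ∨ v i = 3) →
    ((∀ a b : ZMod 4, ∃ c d : ZMod 4,
        c • g1 + d • g2 = fun i => v i * ((a • g1 + b • g2) i)) ↔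
      ((∀ i, v i = 1) ∨ (∀ i, v i = (-1 : ZMod 4)))) := by decide

lemma units13 : ∀ x y : ZMod 4, x * y = 1 → x = 1 ∨ x = 3 := by decide

end Stmt11Aux

open Stmt11Aux in
/-- In `S = (ℤ/4)^4`, let `C` be the subgroup generated by
`(1,1,2,0)` and `(1,0,1,1)`.  Then `|C| = 16`, and a componentwise unit
multiplication `(u₁,u₂,u₃,u₄)` stabilizes `C` exactly when all `uᵢ = 1` or all
`uᵢ = -1`; so the stabilizing unit multiplications form a group `≅ ℤ/2`. -/
theorem stmt11 :
    Nat.card (AddSubgroup.closure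
        ({![1,1,2,0], ![1,0,1,1]} : Set (Fin 4 → ZMod 4))) = 16 ∧
    (∀ u : Fin 4 → (ZMod 4)ˣ,
      ((∀ x ∈ AddSubgroup.closure ({![1,1,2,0], ![1,0,1,1]} : Set (Fin 4 → ZMod 4)),
        (fun i => (u i : ZMod 4) * x i) ∈
          AddSubgroup.closure ({![1,1,2,0], ![1,0,1,1]} : Set (Fin 4 → ZMod 4))) ↔
      ((∀ i, (u i : ZMod 4) = 1) ∨ (∀ i, (u i : ZMod 4) = -1)))) := by
  have hkey : AddSubgroup.closure ({![1,1,2,0], ![1,0,1,1]} : Set (Fin 4 → ZMod 4)) = H := key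
  constructor
  · rw [hkey]
    have hb : Function.Bijective
        (fun p : ZMod 4 × ZMod 4 => (⟨p.1 • g1 + p.2 • g2, ⟨p.1, p.2, rfl⟩⟩ : H)) := by
      constructor
      · intro p q hpq
        exact inj (congrArg Subtype.val hpq)
      · rintro ⟨x, a, b, rfl⟩
        exact ⟨(a, b), rfl⟩
    have := Nat.card_eq_of_bijective _ hb
    rw [← this]
    simp [Nat.card_eq_fintype_card]
  · intro u
    have hu : ∀ i, (u i : ZMod 4) = 1 ∨ (u i : ZMod 4) = 3 :=
      fun i => units13 _ _ (u i).val_inv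
    rw [hkey]
    have haux := aux (fun i => (u i : ZMod 4)) hu
    constructor
    · intro h
      refine haux.mp ?_
      intro a b
      have := h (a • g1 + b • g2) ⟨a, b, rfl⟩
      exact this
    · intro h x hx
      obtain ⟨a, b, rfl⟩ := hx
      exact haux.mpr h a b
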